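/- Let (J,γ) be a metrised commutative real algebra of finite dimension n that is in semi-canonical form with respect to a basis e₁,…,e_n. If there exists 1 ≤ k < n such that the subspaces V = span{e₁,…,e_k} and V' = span{e_{k+1},…,e_n} are mutually γ-orthogonal, then both V and V' are ideals of J; hence (J,γ) is reducible (J is the direct sum of two nonzero mutually γ-orthogonal ideals). -/
import Mathlib


open Module

/-- let `(J,γ)` be a metrised commutative real algebra of dimension `n` in
semi-canonical form with respect to the basis `e₁,…,e_n` (property (i) is the flag condition
`hflag`, property (ii) is the partition condition, encoded by the involution `σ`). If for
some `1 ≤ k < n` the spans `V = span{e₁,…,e_k}` and `V' = span{e_{k+1},…,e_n}` are mutually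
`γ`-orthogonal, then both `V` and `V'` are ideals; hence `(J,γ)` is reducible: `J` is the
direct sum of two nonzero mutually `γ`-orthogonal ideals. -/
theorem stmt_9 {J : Type*} [AddCommGroup J] [Module ℝ J] [FiniteDimensional ℝ J] (n : ℕ)
    (e : Basis (Fin n) ℝ J)
    (mul : J →ₗ[ℝ] J →ₗ[ℝ] J)
    (hcomm : ∀ u v, mul u v = mul v u)
    (γ : J →ₗ[ℝ] J →ₗ[ℝ] ℝ)
    (hsymm : ∀ u v, γ u v = γ v u)
    (hnd : ∀ u, (∀ v, γ u v = 0) → u = 0)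
    (htrace : ∀ u v w, γ (mul u v) w = γ u (mul v w))
    -- semi-canonical form, property (i)
    (hflag : ∀ k, 1 ≤ k → k ≤ n →
      ∀ x ∈ Submodule.span ℝ (⇑e '' {i : Fin n | (i : ℕ) < k}),
        ∀ y, mul x y ∈ Submodule.span ℝ (⇑e '' {i : Fin n | (i : ℕ) < k - 1}))
    -- semi-canonical form, property (ii): the partition into subsets `{i, σ i}`
    (σ : Fin n → Fin n) (hσ : ∀ i, σ (σ i) = i)
    (hoff : ∀ i j : Fin n, j ≠ i → j ≠ σ i → γ (e i) (e j) = 0)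
    (hsingle : ∀ i, σ i = i → γ (e i) (e i) = 1 ∨ γ (e i) (e i) = -1)
    (hpair : ∀ i, σ i ≠ i → γ (e i) (e i) = 0 ∧ γ (e i) (e (σ i)) = 1)
    -- the orthogonality assumption
    (k : ℕ) (hk1 : 1 ≤ k) (hkn : k < n)
    (horth : ∀ i j : Fin n, (i : ℕ) < k → k ≤ (j : ℕ) → γ (e i) (e j) = 0) :
    (∀ x ∈ Submodule.span ℝ (⇑e '' {i : Fin n | (i : ℕ) < k}), ∀ y,
      mul x y ∈ Submodule.span ℝ (⇑e '' {i : Fin n | (i : ℕ) < k})) ∧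
    (∀ x ∈ Submodule.span ℝ (⇑e '' {i : Fin n | k ≤ (i : ℕ)}), ∀ y,
      mul x y ∈ Submodule.span ℝ (⇑e '' {i : Fin n | k ≤ (i : ℕ)})) ∧
    IsCompl (Submodule.span ℝ (⇑e '' {i : Fin n | (i : ℕ) < k}))
      (Submodule.span ℝ (⇑e '' {i : Fin n | k ≤ (i : ℕ)})) ∧
    Submodule.span ℝ (⇑e '' {i : Fin n | (i : ℕ) < k}) ≠ ⊥ ∧
    Submodule.span ℝ (⇑e '' {i : Fin n | k ≤ (i : ℕ)}) ≠ ⊥ ∧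
    (∀ x ∈ Submodule.span ℝ (⇑e '' {i : Fin n | (i : ℕ) < k}),
      ∀ y ∈ Submodule.span ℝ (⇑e '' {i : Fin n | k ≤ (i : ℕ)}), γ x y = 0) := by
 
  set V := Submodule.span ℝ (⇑e '' {i : Fin n | (i : ℕ) < k}) with hV
  set V' := Submodule.span ℝ (⇑e '' {i : Fin n | k ≤ (i : ℕ)}) with hV'
  -- orthogonality
  have hOrth : ∀ x ∈ V, ∀ y ∈ V', γ x y = 0 := by
    intro x hx y hy
    have h1 : ∀ i : Fin n, (i : ℕ) < k → γ (e i) y = 0 := by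
      intro i hi
      have : V' ≤ LinearMap.ker (γ (e i)) := by
        rw [hV']
        apply Submodule.span_le.mpr
        rintro _ ⟨j, hj, rfl⟩
        exact horth i j hi hj
      exact this hy
    have : V ≤ LinearMap.ker (γ.flip y) := by
      rw [hV]
      apply Submodule.span_le.mpr
      rintro _ ⟨i, hi, rfl⟩
      exact h1 i hi
    exact this hx
  -- V is an ideal
  have hVideal : ∀ x ∈ V, ∀ y, mul x y ∈ V := by
    intro x hx y
    have := hflag k hk1 hkn.le x hx y
    refine Submodule.span_mono ?_ this
    apply Set.image_mono
    intro i hi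
    exact lt_of_lt_of_le hi (Nat.sub_le k 1)
  -- IsCompl
  have hdisj : Disjoint V V' := by
    apply e.linearIndependent.disjoint_span_image
    rw [Set.disjoint_left]
    intro i hi hi'
    simp only [Set.mem_setOf_eq] at hi hi'; omega
  have hsup : V ⊔ V' = ⊤ := by
    rw [hV, hV', ← Submodule.span_union, ← Set.image_union]
    have : {i : Fin n | (i : ℕ) < k} ∪ {i : Fin n | k ≤ (i : ℕ)} = Set.univ := by
      ext i; simp [lt_or_ge]
    rw [this, Set.image_univ, e.span_eq]
  have hcompl : IsCompl V V' := ⟨hdisj, codisjoint_iff.mpr hsup⟩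
  -- membership criterion for V'
  have hmem' : ∀ z : J, (∀ v ∈ V, γ z v = 0) → z ∈ V' := by
    intro z hz
    have hz' : z ∈ V ⊔ V' := hsup ▸ Submodule.mem_top
    obtain ⟨a, ha, b, hb, rfl⟩ := Submodule.mem_sup.mp hz'
    have haV : ∀ v ∈ V, γ a v = 0 := by
      intro v hv
      have h1 := hz v hv
      have h2 : γ b v = 0 := hsymm b v ▸ hOrth v hv b hb
      have : γ a v + γ b v = 0 := by
        have := h1; rwa [map_add, LinearMap.add_apply] at this
      linarith
    have ha0 : a = 0 := by
      apply hnd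
      intro w
      have hw : w ∈ V ⊔ V' := hsup ▸ Submodule.mem_top
      obtain ⟨c, hc, d, hd, rfl⟩ := Submodule.mem_sup.mp hw
      have h1 : γ a c = 0 := haV c hc
      have h2 : γ a d = 0 := hOrth a ha d hd
      rw [map_add, h1, h2, add_zero]
    rw [ha0, zero_add]
    exact hb
  -- V' is an ideal
  have hV'ideal : ∀ x ∈ V', ∀ y, mul x y ∈ V' := by
    intro x hx y
    apply hmem'
    intro v hv
    rw [htrace x y v, hcomm y v]
    have hvy : mul v y ∈ V := hVideal v hv y
    rw [hsymm]
    exact hOrth (mul v y) hvy x hx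
  -- nonzero
  have h0n : 0 < n := lt_of_le_of_lt (Nat.zero_le k) hkn
  have hVne : V ≠ ⊥ := by
    intro h
    have : e ⟨0, h0n⟩ ∈ V := Submodule.subset_span ⟨⟨0, h0n⟩, hk1, rfl⟩
    rw [h, Submodule.mem_bot] at this
    exact e.ne_zero _ this
  have hV'ne : V' ≠ ⊥ := by
    intro h
    have : e ⟨k, hkn⟩ ∈ V' := Submodule.subset_span ⟨⟨k, hkn⟩, le_refl k, rfl⟩
    rw [h, Submodule.mem_bot] at this
    exact e.ne_zero _ this
  exact ⟨hVideal, hV'ideal, hcompl, hVne, hV'ne, hOrth⟩
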